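/- Let n : ℕ, let G be an n-qubit stabilizer group with stabilizer state ρ_G, and let P := ε • P(a,b) with ε ∈ {1,-1} and a b : Fin n → ZMod 2 be any signed Hermitian n-qubit Pauli. Set T := trace ((1/2 : ℂ) • (1 + P) * ρ_G). Then: T = 1 if and only if P is (the underlying matrix of) an element of G; T = 0 if and only if -P is an element of G; T = 1/2 if and only if neither P nor -P is an element of G. In particular T ∈ {0, 1/2, 1}. -/

import Mathlib

open Matrix

/-- The unsigned `n`-qubit Pauli-type matrix `W(a,b)`. -/
noncomputable def W (n : ℕ) (a b : Fin n → ZMod 2) :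
    Matrix (Fin n → ZMod 2) (Fin n → ZMod 2) ℂ :=
  fun x y => if x = y + a then (-1 : ℂ) ^ (∑ j, b j * y j : ZMod 2).val else 0

/-- The Hermitian `n`-qubit Pauli `P(a,b) = I^{m(a,b)} • W(a,b)`. -/
noncomputable def PauliP (n : ℕ) (a b : Fin n → ZMod 2) :
    Matrix (Fin n → ZMod 2) (Fin n → ZMod 2) ℂ :=
  Complex.I ^ (Finset.univ.filter fun j => a j = 1 ∧ b j = 1).card • W n a b

/-- An `n`-qubit stabilizer group: a commutative subgroup of the units of the matrix
ring all of whose elements are signed Hermitian Paulis, avoiding `-1`, of order `2^n`. -/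
def IsStabilizerGroup (n : ℕ)
    (G : Subgroup (Matrix (Fin n → ZMod 2) (Fin n → ZMod 2) ℂ)ˣ) : Prop :=
  (∀ g ∈ G, ∀ h ∈ G, g * h = h * g) ∧
  (∀ g ∈ G, ∃ (ε : ℂ) (a b : Fin n → ZMod 2), (ε = 1 ∨ ε = -1) ∧
    (g : Matrix (Fin n → ZMod 2) (Fin n → ZMod 2) ℂ) = ε • PauliP n a b) ∧
  (-1 : (Matrix (Fin n → ZMod 2) (Fin n → ZMod 2) ℂ)ˣ) ∉ G ∧
  Nat.card G = 2 ^ n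

/-- The stabilizer state `ρ_G = 2^{-n} ∑_{g ∈ G} g` of a stabilizer group `G`. -/
noncomputable def stabState (n : ℕ)
    (G : Subgroup (Matrix (Fin n → ZMod 2) (Fin n → ZMod 2) ℂ)ˣ) :
    Matrix (Fin n → ZMod 2) (Fin n → ZMod 2) ℂ :=
  ((2 : ℂ) ^ n)⁻¹ • ∑ᶠ g ∈ (G : Set (Matrix (Fin n → ZMod 2) (Fin n → ZMod 2) ℂ)ˣ),
    (g : Matrix (Fin n → ZMod 2) (Fin n → ZMod 2) ℂ)



lemma chi_add (u v : ZMod 2) : (-1:ℂ)^((u+v).val) = (-1)^u.val * (-1)^v.val := by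
  have h : ∀ u v : ZMod 2, (u+v).val % 2 = (u.val + v.val) % 2 := by decide
  rw [neg_one_pow_eq_pow_mod_two, h, ← neg_one_pow_eq_pow_mod_two, pow_add]

lemma chi_sum {ι : Type*} (s : Finset ι) (f : ι → ZMod 2) :
    (-1:ℂ)^((∑ j ∈ s, f j).val) = ∏ j ∈ s, (-1:ℂ)^((f j).val) := by
  induction s using Finset.cons_induction with
  | empty => simp
  | cons i s hi ih => rw [Finset.sum_cons, Finset.prod_cons, chi_add, ih]

lemma charSum (n : ℕ) (b : Fin n → ZMod 2) :
    ∑ x : Fin n → ZMod 2, (-1:ℂ)^((∑ j, b j * x j : ZMod 2)).val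
      = if b = 0 then 2^n else 0 := by
  have h1 : ∀ x : Fin n → ZMod 2, (-1:ℂ)^((∑ j, b j * x j : ZMod 2)).val
      = ∏ j, (-1:ℂ)^((b j * x j : ZMod 2)).val := fun x => chi_sum _ _
  simp only [h1]
  rw [← Fintype.piFinset_univ, ← Finset.prod_univ_sum (fun _ : Fin n => (Finset.univ : Finset (ZMod 2))) (fun j v => (-1:ℂ)^((b j * v).val))]
  have h2 : ∀ j, (∑ v : ZMod 2, (-1:ℂ)^((b j * v).val))
      = if b j = 0 then 2 else 0 := by
    intro j
    have huniv : (Finset.univ : Finset (ZMod 2)) = {0, 1} := rfl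
    rw [huniv, Finset.sum_pair (by decide)]
    rcases (by decide : ∀ u : ZMod 2, u = 0 ∨ u = 1) (b j) with h | h <;>
      simp [h] <;> norm_num [ZMod.val] <;> exact (by norm_num : (1:ℂ) + (-1) ^ 1 = 0)
  simp only [h2]
  by_cases hb : b = 0
  · simp [hb]
  · obtain ⟨j, hj⟩ : ∃ j, b j ≠ 0 := by
      by_contra h
      push_neg at h
      exact hb (funext h)
    rw [if_neg hb]
    refine Finset.prod_eq_zero (Finset.mem_univ j) ?_
    simp [hj]

lemma zmod_two_pi_add_self {n : ℕ} (x a : Fin n → ZMod 2) : x + a + a = x := by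
  funext j
  have : ∀ u v : ZMod 2, u + v + v = u := by decide
  exact this _ _

lemma zmod_two_pi_add_iff {n : ℕ} (u v w : Fin n → ZMod 2) : u + v = w ↔ u = w + v := by
  constructor
  · rintro rfl; exact (zmod_two_pi_add_self u v).symm
  · rintro rfl; exact zmod_two_pi_add_self w v

lemma W_mul (n : ℕ) (a b a' b' : Fin n → ZMod 2) :
    W n a b * W n a' b'
      = ((-1:ℂ)^((∑ j, b j * a' j : ZMod 2)).val) • W n (a + a') (b + b') := by
  ext x y
  rw [Matrix.mul_apply]
  rw [Finset.sum_eq_single (x + a)]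
  · simp only [W, Matrix.smul_apply, smul_eq_mul]
    have hcond : (x + a = y + a') ↔ (x = y + (a + a')) := by
      rw [zmod_two_pi_add_iff, add_assoc, add_comm a' a]
    rw [if_pos (zmod_two_pi_add_self x a).symm]
    by_cases h : x + a = y + a'
    · rw [if_pos h, if_pos (hcond.mp h), h]
      have expand : (∑ j, b j * (y + a') j : ZMod 2)
          = (∑ j, b j * y j) + (∑ j, b j * a' j) := by
        rw [← Finset.sum_add_distrib]
        exact Finset.sum_congr rfl fun j _ => by simp [Pi.add_apply, mul_add]
      have expand2 : (∑ j, (b + b') j * y j : ZMod 2)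
          = (∑ j, b j * y j) + (∑ j, b' j * y j) := by
        rw [← Finset.sum_add_distrib]
        exact Finset.sum_congr rfl fun j _ => by simp [Pi.add_apply, add_mul]
      rw [expand, expand2, chi_add, chi_add]
      ring
    · rw [if_neg h, if_neg (fun hc => h (hcond.mpr hc)), mul_zero, mul_zero]
  · intro z _ hz
    have : ¬ (x = z + a) := fun hc => hz (by rw [hc, zmod_two_pi_add_self])
    simp [W, this]
  · simp

lemma trace_W (n : ℕ) (a b : Fin n → ZMod 2) :
    (W n a b).trace = if a = 0 ∧ b = 0 then (2:ℂ)^n else 0 := by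
  rw [Matrix.trace]
  simp only [Matrix.diag, W]
  by_cases ha : a = 0
  · subst ha
    simp only [add_zero, eq_self_iff_true, if_true]
    rw [charSum]
    by_cases hb : b = 0 <;> simp [hb]
  · have : ∀ x : Fin n → ZMod 2, ¬ (x = x + a) := by
      intro x hc
      exact ha (by simpa using ((zmod_two_pi_add_iff x a x).mpr hc).symm)
    simp [this, ha]

lemma W_zero (n : ℕ) : W n 0 0 = 1 := by
  ext x y
  simp only [W, Pi.zero_apply, zero_mul, Finset.sum_const_zero, ZMod.val_zero, pow_zero,
    add_zero, Matrix.one_apply]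

lemma dot_eq_card (n : ℕ) (a b : Fin n → ZMod 2) :
    (∑ j, b j * a j : ZMod 2)
      = ((Finset.univ.filter fun j => a j = 1 ∧ b j = 1).card : ZMod 2) := by
  have h : ∀ j, b j * a j = if a j = 1 ∧ b j = 1 then (1 : ZMod 2) else 0 := by
    intro j
    have : ∀ u v : ZMod 2, v * u = if u = 1 ∧ v = 1 then 1 else 0 := by decide
    exact this _ _
  simp only [h]
  rw [Finset.sum_boole]

lemma chi_card (n : ℕ) (a b : Fin n → ZMod 2) :
    (-1:ℂ)^((∑ j, b j * a j : ZMod 2)).val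
      = (-1:ℂ)^((Finset.univ.filter fun j => a j = 1 ∧ b j = 1).card) := by
  rw [dot_eq_card, ZMod.val_natCast, ← neg_one_pow_eq_pow_mod_two]

lemma PauliP_sq (n : ℕ) (a b : Fin n → ZMod 2) :
    PauliP n a b * PauliP n a b = 1 := by
  set m := (Finset.univ.filter fun j => a j = 1 ∧ b j = 1).card with hm
  rw [PauliP, ← hm, smul_mul_smul_comm, W_mul, chi_card, ← hm, smul_smul]
  have hW : W n (a + a) (b + b) = 1 := by
    have ha : a + a = 0 := funext fun j => by
      have : ∀ u : ZMod 2, u + u = 0 := by decide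
      exact this _
    have hb : b + b = 0 := funext fun j => by
      have : ∀ u : ZMod 2, u + u = 0 := by decide
      exact this _
    rw [ha, hb, W_zero]
  rw [hW]
  have : Complex.I ^ m * Complex.I ^ m * (-1:ℂ)^m = 1 := by
    rw [← pow_add, ← two_mul, pow_mul, Complex.I_sq, ← pow_add, ← two_mul, pow_mul]
    norm_num
  rw [this, one_smul]

lemma trace_PauliP (n : ℕ) (a b : Fin n → ZMod 2) :
    (PauliP n a b).trace = if a = 0 ∧ b = 0 then (2:ℂ)^n else 0 := by
  rw [PauliP, Matrix.trace_smul, trace_W, smul_eq_mul]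
  by_cases h : a = 0 ∧ b = 0
  · obtain ⟨ha, hb⟩ := h
    subst ha; subst hb
    have : (Finset.univ.filter fun j : Fin n =>
        (0:Fin n → ZMod 2) j = 1 ∧ (0:Fin n → ZMod 2) j = 1).card = 0 := by
      simp
    simp [this]
  · simp [h]

lemma trace_PauliP_mul (n : ℕ) (a b a' b' : Fin n → ZMod 2)
    (h : ¬(a = a' ∧ b = b')) : (PauliP n a b * PauliP n a' b').trace = 0 := by
  rw [PauliP, PauliP, smul_mul_smul_comm, W_mul, smul_smul, Matrix.trace_smul, trace_W]
  have : ¬(a + a' = 0 ∧ b + b' = 0) := by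
    rintro ⟨h1, h2⟩
    apply h
    constructor
    · funext j
      have := congrFun h1 j
      revert this
      have : ∀ u v : ZMod 2, u + v = 0 → u = v := by decide
      exact this _ _
    · funext j
      have := congrFun h2 j
      revert this
      have : ∀ u v : ZMod 2, u + v = 0 → u = v := by decide
      exact this _ _
  simp [this]

abbrev M (n : ℕ) := Matrix (Fin n → ZMod 2) (Fin n → ZMod 2) ℂ

lemma PauliP_zero (n : ℕ) : PauliP n 0 0 = 1 := by
  rw [PauliP]
  have hc : (Finset.univ.filter fun j : Fin n =>
      (0 : Fin n → ZMod 2) j = 1 ∧ (0 : Fin n → ZMod 2) j = 1) = ∅ := by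
    simp
  rw [hc]
  simp [W_zero]

theorem stmt_5 (n : ℕ)
    (G : Subgroup (Matrix (Fin n → ZMod 2) (Fin n → ZMod 2) ℂ)ˣ)
    (hG : IsStabilizerGroup n G)
    (ε : ℂ) (hε : ε = 1 ∨ ε = -1) (a b : Fin n → ZMod 2)
    (P : Matrix (Fin n → ZMod 2) (Fin n → ZMod 2) ℂ) (hP : P = ε • PauliP n a b)
    (T : ℂ) (hT : T = ((1 / 2 : ℂ) • (1 + P) * stabState n G).trace) :
    (T = 1 ↔ ∃ g ∈ G, (g : Matrix (Fin n → ZMod 2) (Fin n → ZMod 2) ℂ) = P) ∧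
    (T = 0 ↔ ∃ g ∈ G, (g : Matrix (Fin n → ZMod 2) (Fin n → ZMod 2) ℂ) = -P) ∧
    (T = 1 / 2 ↔
      (¬ ∃ g ∈ G, (g : Matrix (Fin n → ZMod 2) (Fin n → ZMod 2) ℂ) = P) ∧
      (¬ ∃ g ∈ G, (g : Matrix (Fin n → ZMod 2) (Fin n → ZMod 2) ℂ) = -P)) ∧
    T ∈ ({0, 1 / 2, 1} : Set ℂ) := by
  classical
  obtain ⟨-, hform, hneg, hcard⟩ := hG
  have h2n : ((2:ℂ)^n) ≠ 0 := pow_ne_zero _ two_ne_zero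
  have hcardM : (Fintype.card (Fin n → ZMod 2) : ℂ) = 2^n := by
    rw [Fintype.card_fun]
    simp
  -- finiteness
  haveI hGfin : Finite G := Nat.finite_of_card_ne_zero (by rw [hcard]; positivity)
  have hfin : (G : Set (M n)ˣ).Finite := Set.toFinite _
  set s : Finset (M n)ˣ := hfin.toFinset with hs
  have hmem : ∀ g : (M n)ˣ, g ∈ s ↔ g ∈ G := fun g => hfin.mem_toFinset
  have hstab : stabState n G = ((2:ℂ)^n)⁻¹ • ∑ g ∈ s, (g : M n) := by
    rw [stabState, ← hfin.coe_toFinset, finsum_mem_coe_finset]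
  -- basic facts about P
  have hPP : P * P = 1 := by
    rw [hP, smul_mul_smul_comm, PauliP_sq]
    rcases hε with rfl | rfl <;> norm_num
  have hPne : P ≠ -P := by
    intro h
    have h1 : (1 : M n) = -1 := by
      calc (1:M n) = P * P := hPP.symm
        _ = P * (-P) := by rw [← h]
        _ = -(P * P) := by rw [mul_neg]
        _ = -1 := by rw [hPP]
    have h2 := congrFun (congrFun h1 0) 0
    rw [Matrix.one_apply_eq, Matrix.neg_apply, Matrix.one_apply_eq] at h2
    exact (by norm_num : (1:ℂ) ≠ -1) h2
  have htrPP : (P * P).trace = 2^n := by rw [hPP, Matrix.trace_one, hcardM]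
  -- key2
  have key2 : ∀ g : (M n)ˣ, g ∈ G → (P * (g : M n)).trace
      = (if (g : M n) = P then (2:ℂ)^n else 0) + (if (g : M n) = -P then -(2:ℂ)^n else 0) := by
    intro g hg
    obtain ⟨ε', a', b', hε', hgm⟩ := hform g hg
    by_cases hab : a = a' ∧ b = b'
    · obtain ⟨rfl, rfl⟩ := hab
      have hsq : PauliP n a b * PauliP n a b = 1 := PauliP_sq n a b
      have hdisj : (ε * ε' = 1 ∧ (g : M n) = P) ∨ (ε * ε' = -1 ∧ (g : M n) = -P) := by
        rcases hε with rfl | rfl <;> rcases hε' with rfl | rfl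
        · exact Or.inl ⟨by norm_num, by rw [hgm, hP]; try simp⟩
        · exact Or.inr ⟨by norm_num, by rw [hgm, hP]; try simp⟩
        · exact Or.inr ⟨by norm_num, by rw [hgm, hP]; try simp⟩
        · exact Or.inl ⟨by norm_num, by rw [hgm, hP]; try simp⟩
      have htr : (P * (g : M n)).trace = ε * ε' * (2:ℂ)^n := by
        rw [hP, hgm, smul_mul_smul_comm, hsq, Matrix.trace_smul, smul_eq_mul,
          Matrix.trace_one, hcardM]
      rcases hdisj with ⟨he, hgP⟩ | ⟨he, hgP⟩
      · rw [htr, he, one_mul, if_pos hgP, if_neg (by rw [hgP]; exact hPne), add_zero]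
      · rw [htr, he, if_neg (by rw [hgP]; exact fun hc => hPne hc.symm), if_pos hgP,
          zero_add, neg_one_mul]
    · have htr0 : (P * (g : M n)).trace = 0 := by
        rw [hP, hgm, smul_mul_smul_comm, Matrix.trace_smul, trace_PauliP_mul n a b a' b' hab,
          smul_zero]
      rw [htr0]
      have hgnP : (g : M n) ≠ P := by
        intro hc
        rw [hc, htrPP] at htr0
        exact h2n htr0
      have hgnP' : (g : M n) ≠ -P := by
        intro hc
        rw [hc, mul_neg, Matrix.trace_neg, htrPP] at htr0
        exact h2n (neg_eq_zero.mp htr0)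
      rw [if_neg hgnP, if_neg hgnP', add_zero]
  -- key1
  have key1 : ∀ g : (M n)ˣ, g ∈ G → (g : M n).trace = if g = 1 then (2:ℂ)^n else 0 := by
    intro g hg
    by_cases h1 : g = 1
    · rw [if_pos h1, h1, Units.val_one, Matrix.trace_one, hcardM]
    · rw [if_neg h1]
      obtain ⟨ε', a', b', hε', hgm⟩ := hform g hg
      rw [hgm, Matrix.trace_smul, smul_eq_mul, trace_PauliP]
      by_cases hab : a' = 0 ∧ b' = 0
      · exfalso
        obtain ⟨rfl, rfl⟩ := hab
        rw [PauliP_zero] at hgm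
        rcases hε' with rfl | rfl
        · exact h1 (Units.ext (by rw [hgm, one_smul, Units.val_one]))
        · apply hneg
          have : g = -1 := Units.ext (by rw [hgm]; simp)
          rwa [this] at hg
      · simp [hab]
  -- trace of stabState
  have hone : (1 : (M n)ˣ) ∈ s := (hmem 1).mpr (one_mem G)
  have htrace_rho : (stabState n G).trace = 1 := by
    rw [hstab, Matrix.trace_smul, Matrix.trace_sum, smul_eq_mul]
    rw [Finset.sum_congr rfl fun g hgs => key1 g ((hmem g).mp hgs)]
    rw [Finset.sum_ite_eq' s 1 (fun _ => (2:ℂ)^n), if_pos hone, inv_mul_cancel₀ h2n]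
  -- exclusion
  have hexcl : ¬ ((∃ g ∈ G, (g : M n) = P) ∧ (∃ g ∈ G, (g : M n) = -P)) := by
    rintro ⟨⟨g, hgG, hgP⟩, ⟨h, hhG, hhP⟩⟩
    apply hneg
    have : g * h = -1 := Units.ext (by
      rw [Units.val_mul, hgP, hhP, mul_neg, hPP]
      simp)
    rw [← this]
    exact mul_mem hgG hhG
  -- trace (P * rho)
  have hQ : (P * stabState n G).trace
      = (if (∃ g ∈ G, (g : M n) = P) then (1:ℂ) else 0)
        + (if (∃ g ∈ G, (g : M n) = -P) then (-1:ℂ) else 0) := by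
    rw [hstab, Matrix.mul_smul, Matrix.trace_smul, Finset.mul_sum, Matrix.trace_sum, smul_eq_mul]
    rw [Finset.sum_congr rfl fun g hgs => key2 g ((hmem g).mp hgs)]
    rw [Finset.sum_add_distrib]
    have hA : (∑ g ∈ s, if (g : M n) = P then (2:ℂ)^n else 0)
        = if (∃ g ∈ G, (g : M n) = P) then (2:ℂ)^n else 0 := by
      by_cases hex : ∃ g ∈ G, (g : M n) = P
      · obtain ⟨g0, hg0G, hg0⟩ := hex
        rw [if_pos ⟨g0, hg0G, hg0⟩, Finset.sum_eq_single g0]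
        · rw [if_pos hg0]
        · intro h hhs hne
          rw [if_neg]
          intro hc
          exact hne (Units.ext (hc.trans hg0.symm))
        · intro hg0s
          exact absurd ((hmem g0).mpr hg0G) hg0s
      · rw [if_neg hex, Finset.sum_eq_zero]
        intro g hgs
        rw [if_neg]
        intro hc
        exact hex ⟨g, (hmem g).mp hgs, hc⟩
    have hB : (∑ g ∈ s, if (g : M n) = -P then -(2:ℂ)^n else 0)
        = if (∃ g ∈ G, (g : M n) = -P) then -(2:ℂ)^n else 0 := by
      by_cases hex : ∃ g ∈ G, (g : M n) = -P
      · obtain ⟨g0, hg0G, hg0⟩ := hex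
        rw [if_pos ⟨g0, hg0G, hg0⟩, Finset.sum_eq_single g0]
        · rw [if_pos hg0]
        · intro h hhs hne
          rw [if_neg]
          intro hc
          exact hne (Units.ext (hc.trans hg0.symm))
        · intro hg0s
          exact absurd ((hmem g0).mpr hg0G) hg0s
      · rw [if_neg hex, Finset.sum_eq_zero]
        intro g hgs
        rw [if_neg]
        intro hc
        exact hex ⟨g, (hmem g).mp hgs, hc⟩
    rw [hA, hB, mul_add]
    congr 1
    · by_cases hex : ∃ g ∈ G, (g : M n) = P <;> simp [hex, inv_mul_cancel₀ h2n]
    · by_cases hex : ∃ g ∈ G, (g : M n) = -P <;>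
        simp [hex, inv_mul_cancel₀ h2n, mul_neg]
  -- T formula
  have hTval : T = 1/2 * (1 + ((if (∃ g ∈ G, (g : M n) = P) then (1:ℂ) else 0)
        + (if (∃ g ∈ G, (g : M n) = -P) then (-1:ℂ) else 0))) := by
    rw [hT, smul_mul_assoc, Matrix.trace_smul, add_mul, one_mul, Matrix.trace_add,
      htrace_rho, hQ, smul_eq_mul]
  by_cases hQ1 : ∃ g ∈ G, (g : M n) = P
  · have hQ2 : ¬ ∃ g ∈ G, (g : M n) = -P := fun h => hexcl ⟨hQ1, h⟩
    rw [if_pos hQ1, if_neg hQ2] at hTval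
    have hT1 : T = 1 := by rw [hTval]; norm_num
    refine ⟨⟨fun _ => hQ1, fun _ => hT1⟩, ⟨fun h => absurd (hT1 ▸ h) (by norm_num),
      fun h => absurd h hQ2⟩, ⟨fun h => absurd (hT1 ▸ h) (by norm_num),
      fun h => absurd hQ1 h.1⟩, by rw [hT1]; right; right; rfl⟩
  · by_cases hQ2 : ∃ g ∈ G, (g : M n) = -P
    · rw [if_neg hQ1, if_pos hQ2] at hTval
      have hT0 : T = 0 := by rw [hTval]; norm_num
      refine ⟨⟨fun h => absurd (hT0 ▸ h) (by norm_num), fun h => absurd h hQ1⟩,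
        ⟨fun _ => hQ2, fun _ => hT0⟩, ⟨fun h => absurd (hT0 ▸ h) (by norm_num),
        fun h => absurd hQ2 h.2⟩, by rw [hT0]; left; rfl⟩
    · rw [if_neg hQ1, if_neg hQ2] at hTval
      have hTh : T = 1/2 := by rw [hTval]; norm_num
      refine ⟨⟨fun h => absurd (hTh ▸ h) (by norm_num), fun h => absurd h hQ1⟩,
        ⟨fun h => absurd (hTh ▸ h) (by norm_num), fun h => absurd h hQ2⟩,
        ⟨fun _ => ⟨hQ1, hQ2⟩, fun _ => hTh⟩, by rw [hTh]; right; left; rfl⟩
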